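/- (Proposition 2.1.) For any sampling strategy (q_t), any betting strategy (λ_t(m*)), and any δ ∈ (0,1), the wealth process at the true misstated fraction satisfies P(∃ t ∈ {1,…,N} : W_t(m*) ≥ 1/δ) ≤ δ. -/

import Mathlib

/-!
At the true value `m*`, the importance-weighted observation `Z_t` is conditionally unbiased for
`μ_t(m*)`, the part of the misstatement not yet observed, so every factor
`1 + λ_t (Z_t - μ_t(m*))` has conditional mean one. Hence `W_t(m*)`, stopped at `N`, is a
nonnegative martingale started at `1`, and Ville's inequality (Doob's maximal inequality applied
to it) bounds the probability that it ever reaches `1/δ` by `δ`.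
-/

open MeasureTheory Finset

namespace RLFA

variable {Ω : Type*}

/-- `remaining I t ω` is the set `N_t = {1,…,N} \ {I_1, …, I_{t-1}}` of indices not yet
sampled before time `t`. -/
def remaining {N : ℕ} (I : ℕ → Ω → Fin N) (t : ℕ) (ω : Ω) : Finset (Fin N) :=
  Finset.univ \ (Finset.Icc 1 (t - 1)).image fun j => I j ω

/-- The filtration `F_t = σ(I_1, …, I_t)`. -/
def filt {N : ℕ} (I : ℕ → Ω → Fin N) (t : ℕ) : MeasurableSpace Ω :=
  ⨆ j ∈ Finset.Icc 1 t, MeasurableSpace.comap (I j) ⊤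

/-- The importance-weighted observation `Z_t = f(I_t) · π(I_t) / q_t(I_t)`. -/
noncomputable def Zt {N : ℕ} (π f : Fin N → ℝ) (q : ℕ → Ω → Fin N → ℝ)
    (I : ℕ → Ω → Fin N) (t : ℕ) (ω : Ω) : ℝ :=
  f (I t ω) * (π (I t ω) / q t ω (I t ω))

/-- `μ_t(m) = m − Σ_{j=1}^{t−1} π(I_j) f(I_j)`. -/
def muT {N : ℕ} (π f : Fin N → ℝ) (I : ℕ → Ω → Fin N) (m : ℝ) (t : ℕ) (ω : Ω) : ℝ :=
  m - ∑ j ∈ Finset.Icc 1 (t - 1), π (I j ω) * f (I j ω)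

section Martingale

variable [m0 : MeasurableSpace Ω] {μ : Measure Ω} [IsFiniteMeasure μ] {ℱ : Filtration ℕ m0}

theorem integrable_and_integral_eq_of_condExp_ae_eq {m : MeasurableSpace Ω} (hm : m ≤ m0)
    {f g : Ω → ℝ} (h : μ[f | m] =ᵐ[μ] g) (hg : ∫ ω, g ω ∂μ ≠ 0) :
    Integrable f μ ∧ ∫ ω, f ω ∂μ = ∫ ω, g ω ∂μ := by
  have hf : Integrable f μ := by
    by_contra hf
    rw [condExp_of_not_integrable hf] at h
    exact hg (by simp [← integral_congr_ae h])
  exact ⟨hf, (integral_condExp hm).symm.trans (integral_congr_ae h)⟩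

/-- Integrability propagates from `M 0`: the conditional expectation of a non-integrable
function is `0`. -/
theorem martingale_min_of_condExp_succ {M : ℕ → Ω → ℝ} {N : ℕ}
    (hadp : ∀ n ≤ N, StronglyMeasurable[ℱ n] (M n)) (h0 : ∫ ω, M 0 ω ∂μ ≠ 0)
    (hsucc : ∀ n < N, μ[M (n + 1) | ℱ n] =ᵐ[μ] M n) :
    Martingale (fun n => M (min n N)) ℱ μ := by
  have hint : ∀ n ≤ N, Integrable (M n) μ ∧ ∫ ω, M n ω ∂μ = ∫ ω, M 0 ω ∂μ := by
    intro n
    induction n with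
    | zero => exact fun _ => ⟨.of_integral_ne_zero h0, rfl⟩
    | succ n ih =>
      intro hn
      obtain ⟨-, hn_int⟩ := ih (by omega)
      obtain ⟨hint, heq⟩ := integrable_and_integral_eq_of_condExp_ae_eq (ℱ.le n)
        (hsucc n hn) (hn_int ▸ h0)
      exact ⟨hint, heq.trans hn_int⟩
  refine martingale_nat (fun n => (hadp _ (min_le_right n N)).mono (ℱ.mono (min_le_left n N)))
    (fun n => (hint _ (min_le_right n N)).1) fun n => ?_
  rcases lt_or_ge n N with hn | hn
  · simpa [min_eq_left hn.le, min_eq_left (Nat.succ_le_of_lt hn)] using (hsucc n hn).symm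
  · simp only [min_eq_right hn, min_eq_right (hn.trans n.le_succ)]
    rw [condExp_of_stronglyMeasurable (ℱ.le n) ((hadp N le_rfl).mono (ℱ.mono hn))
      (hint N le_rfl).1]

theorem _root_.MeasureTheory.Martingale.ville_ineq {M : ℕ → Ω → ℝ} (hM : Martingale M ℱ μ)
    (N : ℕ) (hnn : 0 ≤ᵐ[μ] M N) {ε : ℝ} (hε : 0 < ε) :
    μ {ω | ∃ t ≤ N, ε ≤ M t ω} ≤ ENNReal.ofReal ((∫ ω, M 0 ω ∂μ) / ε) := by
  set S := {ω | (ε.toNNReal : ℝ) ≤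
    (range (N + 1)).sup' nonempty_range_add_one fun k => (M⁺) k ω}
  have hmax := maximal_ineq hM.submartingale.pos (posPart_nonneg M) (ε := ε.toNNReal) N
  have hsub : {ω | ∃ t ≤ N, ε ≤ M t ω} ⊆ S := by
    rintro ω ⟨t, htN, ht⟩
    refine le_trans ?_ (le_sup' (fun k => (M⁺) k ω) (mem_range.2 (Nat.lt_succ_of_le htN)))
    rw [Real.coe_toNNReal _ hε.le, Pi.posPart_apply]
    exact ht.trans (le_posPart _)
  have hint : ∫ ω in S, (M⁺) N ω ∂μ ≤ ∫ ω, M 0 ω ∂μ := by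
    have hpos : (M⁺) N =ᵐ[μ] M N := by
      filter_upwards [hnn] with ω hω
      exact posPart_eq_self.2 hω
    calc ∫ ω in S, (M⁺) N ω ∂μ ≤ ∫ ω, (M⁺) N ω ∂μ :=
          setIntegral_le_integral (hM.submartingale.pos.integrable N)
            (.of_forall fun ω => posPart_nonneg _)
      _ = ∫ ω, M N ω ∂μ := integral_congr_ae hpos
      _ = ∫ ω, M 0 ω ∂μ := by
          simpa using (hM.setIntegral_eq (Nat.zero_le N) MeasurableSet.univ).symm
  rw [ENNReal.ofReal_div_of_pos hε, ENNReal.le_div_iff_mul_le (by simp [hε]) (by simp), mul_comm]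
  calc ENNReal.ofReal ε * μ {ω | ∃ t ≤ N, ε ≤ M t ω} ≤ ε.toNNReal * μ S := by
        rw [ENNReal.ofReal]; exact mul_le_mul_right (measure_mono hsub) _
    _ ≤ _ := hmax.trans (ENNReal.ofReal_le_ofReal hint)

end Martingale

theorem measurable_of_mul_succ {ℱ : ℕ → MeasurableSpace Ω} (hℱ : Monotone ℱ)
    {W g : ℕ → Ω → ℝ} {N : ℕ} (hW0 : ∀ ω, W 0 ω = 1)
    (hrec : ∀ n < N, ∀ ω, W (n + 1) ω = W n ω * g (n + 1) ω)
    (hg : ∀ n < N, Measurable[ℱ (n + 1)] (g (n + 1))) :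
    ∀ n ≤ N, Measurable[ℱ n] (W n) := by
  intro n
  induction n with
  | zero => exact fun _ => funext hW0 ▸ measurable_const
  | succ n ih =>
    intro hn
    rw [funext (hrec n hn)]
    exact ((ih (by omega)).mono (hℱ n.le_succ) le_rfl).mul (hg n hn)

theorem ae_nonneg_of_mul_succ [MeasurableSpace Ω] {μ : Measure Ω} {W g : ℕ → Ω → ℝ} {N : ℕ}
    (hW0 : ∀ ω, W 0 ω = 1) (hrec : ∀ n < N, ∀ ω, W (n + 1) ω = W n ω * g (n + 1) ω)
    (hg : ∀ n < N, 0 ≤ᵐ[μ] g (n + 1)) :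
    ∀ n ≤ N, 0 ≤ᵐ[μ] W n := by
  intro n
  induction n with
  | zero => exact fun _ => .of_forall fun ω => (hW0 ω).symm ▸ zero_le_one
  | succ n ih =>
    intro hn
    filter_upwards [ih (by omega), hg n hn] with ω hW hg
    rw [hrec n hn ω]
    exact mul_nonneg hW hg

theorem measurable_apply_of_countable {m : MeasurableSpace Ω} {ι : Type*} [Countable ι]
    [MeasurableSpace ι] [MeasurableSingletonClass ι] {F : Ω → ι → ℝ} {g : Ω → ι}
    (hF : ∀ i, Measurable fun ω => F ω i) (hg : Measurable g) :
    Measurable fun ω => F ω (g ω) :=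
  (measurable_from_prod_countable_left (f := fun p : Ω × ι => F p.1 p.2) hF).comp
    (measurable_id.prodMk hg)

theorem sum_mul_one_add_mul_div_sub {ι : Type*} (s : Finset ι) {q a : ι → ℝ} (l : ℝ)
    (hq : ∀ i ∈ s, 0 < q i) (hq1 : ∑ i ∈ s, q i = 1) :
    ∑ i ∈ s, q i * (1 + l * (a i / q i - ∑ j ∈ s, a j)) = 1 := by
  calc ∑ i ∈ s, q i * (1 + l * (a i / q i - ∑ j ∈ s, a j))
      = ∑ i ∈ s, (q i + l * a i - l * (∑ j ∈ s, a j) * q i) :=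
        sum_congr rfl fun i hi => by field_simp [(hq i hi).ne']; ring
    _ = 1 := by rw [sum_sub_distrib, sum_add_distrib, ← mul_sum, ← mul_sum, hq1]; ring

section Sampling

variable {N : ℕ} (I : ℕ → Ω → Fin N)

theorem filt_mono : Monotone (filt I) :=
  fun _ _ hst => biSup_mono fun _ hj => mem_Icc.2 ⟨(mem_Icc.1 hj).1, (mem_Icc.1 hj).2.trans hst⟩

theorem filt_le [m0 : MeasurableSpace Ω] (hI : ∀ t, Measurable (I t)) (t : ℕ) :
    filt I t ≤ m0 :=
  iSup₂_le fun j _ => (hI j).comap_le.trans' (MeasurableSpace.comap_mono le_top)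

def filtration [m0 : MeasurableSpace Ω] (hI : ∀ t, Measurable (I t)) : Filtration ℕ m0 :=
  ⟨filt I, filt_mono I, filt_le I hI⟩

theorem measurable_filt {j t : ℕ} (h1 : 1 ≤ j) (h2 : j ≤ t) : Measurable[filt I t] (I j) :=
  measurable_iff_comap_le.2 <| (MeasurableSpace.comap_mono le_top).trans <|
    le_iSup₂_of_le (f := fun j (_ : j ∈ Icc 1 t) => MeasurableSpace.comap (I j) ⊤) j
      (mem_Icc.2 ⟨h1, h2⟩) le_rfl

theorem measurable_muT (π f : Fin N → ℝ) (m : ℝ) (t : ℕ) :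
    Measurable[filt I (t - 1)] (muT π f I m t) :=
  measurable_const.sub <| Finset.measurable_sum _ fun _ hj =>
    (measurable_of_countable fun i => π i * f i).comp
      (measurable_filt I (mem_Icc.1 hj).1 (mem_Icc.1 hj).2)

theorem measurable_Zt (π f : Fin N → ℝ) {q : ℕ → Ω → Fin N → ℝ} {t : ℕ} (ht : 1 ≤ t)
    (hq : ∀ i, Measurable[filt I (t - 1)] fun ω => q t ω i) :
    Measurable[filt I t] (Zt π f q I t) :=
  measurable_apply_of_countable (F := fun ω i => f i * (π i / q t ω i))
    (fun i => measurable_const.mul <| measurable_const.div <|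
      (hq i).mono (filt_mono I (Nat.sub_le t 1)) le_rfl)
    (measurable_filt I ht le_rfl)

theorem measurable_bet (π f : Fin N → ℝ) {q : ℕ → Ω → Fin N → ℝ} {lam : Ω → ℝ} (m : ℝ)
    {t : ℕ} (ht : 1 ≤ t) (hq : ∀ i, Measurable[filt I (t - 1)] fun ω => q t ω i)
    (hlam : Measurable[filt I (t - 1)] lam) :
    Measurable[filt I t] fun ω => 1 + lam ω * (Zt π f q I t ω - muT π f I m t ω) :=
  have hmono : filt I (t - 1) ≤ filt I t := filt_mono I (Nat.sub_le t 1)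
  measurable_const.add <| (hlam.mono hmono le_rfl).mul <|
    (measurable_Zt I π f ht hq).sub ((measurable_muT I π f m t).mono hmono le_rfl)

theorem sum_remaining_eq_muT (π f : Fin N → ℝ) {t : ℕ} {ω : Ω}
    (hWoR : ∀ s, 1 ≤ s → s < t → I s ω ∈ remaining I s ω) :
    ∑ i ∈ remaining I t ω, π i * f i = muT π f I (∑ i, π i * f i) t ω := by
  have hinj : Set.InjOn (fun j => I j ω) (Icc 1 (t - 1) : Set ℕ) := by
    intro x hx y hy hxy
    by_contra hne
    wlog hlt : x < y generalizing x y
    · exact this hy hx hxy.symm (Ne.symm hne) (by omega)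
    simp only [coe_Icc, Set.mem_Icc] at hx hy
    have hy_new := hWoR y hy.1 (by omega)
    simp only [remaining, mem_sdiff, mem_univ, mem_image, mem_Icc, true_and, not_exists,
      not_and] at hy_new
    exact hy_new x ⟨hx.1, by omega⟩ hxy
  rw [remaining, sum_sdiff_eq_sub (subset_univ _), sum_image hinj, muT]

/-- The bet is fair: importance weighting makes `Z_t` conditionally unbiased for `μ_t(m*)`. -/
theorem condExp_mul_bet_ae_eq [MeasurableSpace Ω] {μ : Measure Ω} (π f : Fin N → ℝ)
    {q : ℕ → Ω → Fin N → ℝ} {lam V : Ω → ℝ} {t : ℕ}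
    (hq_meas : ∀ i, StronglyMeasurable[filt I (t - 1)] fun ω => q t ω i)
    (hq_pos : ∀ ω, ∀ i ∈ remaining I t ω, 0 < q t ω i)
    (hq_sum : ∀ ω, ∑ i ∈ remaining I t ω, q t ω i = 1)
    (hWoR : ∀ s ω, 1 ≤ s → s < t → I s ω ∈ remaining I s ω)
    (hcond : ∀ G : Ω → Fin N → ℝ,
      (∀ i, StronglyMeasurable[filt I (t - 1)] fun ω => G ω i) →
      μ[(fun ω => G ω (I t ω)) | filt I (t - 1)]
        =ᵐ[μ] fun ω => ∑ i ∈ remaining I t ω, q t ω i * G ω i)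
    (hlam : Measurable[filt I (t - 1)] lam) (hV : Measurable[filt I (t - 1)] V) :
    μ[fun ω => V ω * (1 + lam ω * (Zt π f q I t ω - muT π f I (∑ i, π i * f i) t ω))
      | filt I (t - 1)] =ᵐ[μ] V := by
  set G : Ω → Fin N → ℝ := fun ω i =>
    V ω * (1 + lam ω * (f i * (π i / q t ω i) - muT π f I (∑ i, π i * f i) t ω))
  have hG : ∀ i, StronglyMeasurable[filt I (t - 1)] fun ω => G ω i := fun i =>
    (hV.mul <| measurable_const.add <| hlam.mul <|
      (measurable_const.mul (measurable_const.div (hq_meas i).measurable)).sub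
        (measurable_muT I π f _ t)).stronglyMeasurable
  refine (hcond G hG).trans (.of_forall fun ω => ?_)
  have hfair := sum_mul_one_add_mul_div_sub (remaining I t ω) (a := fun i => π i * f i) (lam ω)
    (hq_pos ω) (hq_sum ω)
  rw [sum_remaining_eq_muT I π f (hWoR · ω)] at hfair
  calc ∑ i ∈ remaining I t ω, q t ω i * G ω i
      = V ω * ∑ i ∈ remaining I t ω,
          q t ω i * (1 + lam ω * (π i * f i / q t ω i - muT π f I (∑ i, π i * f i) t ω)) := by
        rw [mul_sum]
        exact sum_congr rfl fun i _ => by simp only [G]; ring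
    _ = V ω := by rw [hfair, mul_one]

end Sampling

theorem statement2_general
    [m0 : MeasurableSpace Ω] (μ : Measure Ω) [IsProbabilityMeasure μ]
    {N : ℕ}
    (π f : Fin N → ℝ)
    (I : ℕ → Ω → Fin N) (hI : ∀ t, Measurable (I t))
    (q : ℕ → Ω → Fin N → ℝ)
    (hq_meas : ∀ t, 1 ≤ t → t ≤ N → ∀ i,
      StronglyMeasurable[filt I (t - 1)] fun ω => q t ω i)
    (hq_pos : ∀ t ω, 1 ≤ t → t ≤ N → ∀ i ∈ remaining I t ω, 0 < q t ω i)
    (hq_sum : ∀ t ω, 1 ≤ t → t ≤ N → ∑ i ∈ remaining I t ω, q t ω i = 1)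
    (hWoR : ∀ t ω, 1 ≤ t → t ≤ N → I t ω ∈ remaining I t ω)
    (hcond : ∀ t, 1 ≤ t → t ≤ N → ∀ G : Ω → Fin N → ℝ,
      (∀ i, StronglyMeasurable[filt I (t - 1)] fun ω => G ω i) →
      μ[(fun ω => G ω (I t ω)) | filt I (t - 1)]
        =ᵐ[μ] fun ω => ∑ i ∈ remaining I t ω, q t ω i * G ω i)
    (mstar : ℝ) (hmstar : mstar = ∑ i, π i * f i)
    (lam : ℕ → Ω → ℝ)
    (hlam_meas : ∀ t, 1 ≤ t → t ≤ N → StronglyMeasurable[filt I (t - 1)] (lam t))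
    (hfac : ∀ t, 1 ≤ t → t ≤ N →
      ∀ᵐ ω ∂μ, 0 ≤ 1 + lam t ω * (Zt π f q I t ω - muT π f I mstar t ω))
    (W : ℕ → Ω → ℝ)
    (hW0 : ∀ ω, W 0 ω = 1)
    (hWrec : ∀ t, 1 ≤ t → t ≤ N → ∀ ω,
      W t ω = W (t - 1) ω * (1 + lam t ω * (Zt π f q I t ω - muT π f I mstar t ω)))
    (δ : ℝ) (hδ : δ ∈ Set.Ioo (0 : ℝ) 1) :
    μ {ω | ∃ t, 1 ≤ t ∧ t ≤ N ∧ 1 / δ ≤ W t ω} ≤ ENNReal.ofReal δ := by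
  subst hmstar
  set bet : ℕ → Ω → ℝ := fun t ω =>
    1 + lam t ω * (Zt π f q I t ω - muT π f I (∑ i, π i * f i) t ω)
  have hrec : ∀ n < N, ∀ ω, W (n + 1) ω = W n ω * bet (n + 1) ω :=
    fun n hn => hWrec (n + 1) le_add_self hn
  have hWmeas : ∀ n ≤ N, Measurable[filt I n] (W n) :=
    measurable_of_mul_succ (filt_mono I) hW0 hrec fun n hn =>
      measurable_bet I π f _ le_add_self (fun i => (hq_meas _ le_add_self hn i).measurable)
        (hlam_meas _ le_add_self hn).measurable
  have hstep : ∀ n < N, μ[W (n + 1) | filt I n] =ᵐ[μ] W n := fun n hn => by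
    have hfair := condExp_mul_bet_ae_eq I π f (hq_meas _ le_add_self hn)
      (fun ω => hq_pos _ ω le_add_self hn) (fun ω => hq_sum _ ω le_add_self hn)
      (fun s ω hs1 hst => hWoR s ω hs1 (by omega)) (hcond _ le_add_self hn)
      (hlam_meas _ le_add_self hn).measurable (V := W n)
    rw [Nat.add_sub_cancel] at hfair
    rw [funext (hrec n hn)]
    exact hfair (hWmeas n hn.le)
  have hmart : Martingale (fun n => W (min n N)) (filtration I hI) μ :=
    martingale_min_of_condExp_succ (fun n hn => (hWmeas n hn).stronglyMeasurable)
      (by simp [hW0]) hstep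
  have hnn := ae_nonneg_of_mul_succ hW0 hrec (fun n hn => hfac _ le_add_self hn) N le_rfl
  calc μ {ω | ∃ t, 1 ≤ t ∧ t ≤ N ∧ 1 / δ ≤ W t ω}
      ≤ μ {ω | ∃ t ≤ N, 1 / δ ≤ W (min t N) ω} :=
        measure_mono fun ω ⟨t, _, htN, ht⟩ => ⟨t, htN, by rwa [min_eq_left htN]⟩
    _ ≤ ENNReal.ofReal ((∫ ω, W (min 0 N) ω ∂μ) / (1 / δ)) :=
        hmart.ville_ineq N (by simpa using hnn) (one_div_pos.2 hδ.1)
    _ = ENNReal.ofReal δ := by simp [hW0]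

/-- **Proposition 2.1.** For any sampling strategy `(q_t)`, any betting strategy
`(λ_t(m*))`, and any `δ ∈ (0,1)`, the wealth process at the true misstated fraction satisfies
`P(∃ t ∈ {1,…,N} : W_t(m*) ≥ 1/δ) ≤ δ`. -/
theorem statement2
    [m0 : MeasurableSpace Ω] (μ : Measure Ω) [IsProbabilityMeasure μ]
    {N : ℕ} (hN : 1 ≤ N)
    (π f : Fin N → ℝ)
    (hπ : ∀ i, π i ∈ Set.Ioc (0 : ℝ) 1) (hπsum : ∑ i, π i = 1)
    (hf : ∀ i, f i ∈ Set.Icc (0 : ℝ) 1)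
    (I : ℕ → Ω → Fin N) (hI : ∀ t, Measurable (I t))
    (q : ℕ → Ω → Fin N → ℝ)
    (hq_meas : ∀ t, 1 ≤ t → t ≤ N → ∀ i,
      StronglyMeasurable[filt I (t - 1)] fun ω => q t ω i)
    (hq_pos : ∀ t ω, 1 ≤ t → t ≤ N → ∀ i ∈ remaining I t ω, 0 < q t ω i)
    (hq_sum : ∀ t ω, 1 ≤ t → t ≤ N → ∑ i ∈ remaining I t ω, q t ω i = 1)
    (hWoR : ∀ t ω, 1 ≤ t → t ≤ N → I t ω ∈ remaining I t ω)
    (hcond : ∀ t, 1 ≤ t → t ≤ N → ∀ G : Ω → Fin N → ℝ,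
      (∀ i, StronglyMeasurable[filt I (t - 1)] fun ω => G ω i) →
      μ[(fun ω => G ω (I t ω)) | filt I (t - 1)]
        =ᵐ[μ] fun ω => ∑ i ∈ remaining I t ω, q t ω i * G ω i)
    (mstar : ℝ) (hmstar : mstar = ∑ i, π i * f i)
    (lam : ℕ → Ω → ℝ)
    (hlam_meas : ∀ t, 1 ≤ t → t ≤ N → StronglyMeasurable[filt I (t - 1)] (lam t))
    (hfac : ∀ t, 1 ≤ t → t ≤ N →
      ∀ᵐ ω ∂μ, 0 ≤ 1 + lam t ω * (Zt π f q I t ω - muT π f I mstar t ω))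
    (W : ℕ → Ω → ℝ)
    (hW0 : ∀ ω, W 0 ω = 1)
    (hWrec : ∀ t, 1 ≤ t → t ≤ N → ∀ ω,
      W t ω = W (t - 1) ω * (1 + lam t ω * (Zt π f q I t ω - muT π f I mstar t ω)))
    (δ : ℝ) (hδ : δ ∈ Set.Ioo (0 : ℝ) 1) :
    μ {ω | ∃ t, 1 ≤ t ∧ t ≤ N ∧ 1 / δ ≤ W t ω} ≤ ENNReal.ofReal δ :=
  statement2_general (m0 := m0) μ π f I hI q hq_meas hq_pos hq_sum hWoR hcond mstar hmstar lam
    hlam_meas hfac W hW0 hWrec δ hδ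

end RLFA
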